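/- Let V : Δ(S) → ℝ be convex and continuous and let a ∈ A. Then the function Q(b) = inf_{μ̃∈D̃_a} U_V(b,a,μ̃) is convex in the belief state b on Δ(S). -/

import Mathlib

open MeasureTheory

section Defs

variable {S Z A : Type*}

/-- Observation weight `n_z(b,p) = Σ_s Σ_{s'} p_s(s',z) b_s`. -/
def obsW [Fintype S] (b : S → ℝ) (p : S → (S × Z) → ℝ) (z : Z) : ℝ :=
  ∑ s, ∑ s', p s (s', z) * b s

/-- Bayesian belief update `f(b,p,z)`. -/
noncomputable def bUpd [Fintype S] (b : S → ℝ) (p : S → (S × Z) → ℝ) (z : Z) : S → ℝ :=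
  fun s' => (∑ s, p s (s', z) * b s) / obsW b p z

/-- The support set `X̃_{as}`. -/
def XasSet [Fintype S] [Fintype Z] (pbar : (S × Z) → ℝ) :
    Set (((S × Z) → ℝ) × ((S × Z) → ℝ)) :=
  {x | (∀ i, x.1 i - pbar i ≤ x.2 i) ∧ (∀ i, pbar i - x.1 i ≤ x.2 i) ∧
       x.1 ∈ stdSimplex ℝ (S × Z)}

/-- The box uncertainty set `B_{as}`. -/
def BasSet [Fintype S] [Fintype Z] (pbar c : (S × Z) → ℝ) : Set ((S × Z) → ℝ) :=
  {p | p ∈ stdSimplex ℝ (S × Z) ∧ ∀ i, |p i - pbar i| ≤ c i}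

/-- The ambiguity set `D̃_{as}`. -/
def DasSet [Fintype S] [Fintype Z] (pbar c : (S × Z) → ℝ) :
    Set (Measure (((S × Z) → ℝ) × ((S × Z) → ℝ))) :=
  {μ | IsProbabilityMeasure μ ∧ μ (XasSet pbar) = 1 ∧
       Integrable (fun x => x.2) μ ∧ (∫ x, x.2 ∂μ) = c}

/-- The product ambiguity set `D̃_a = ⊗_s D̃_{as}`. -/
def DaSet [Fintype S] [Fintype Z] (pbar c : S → (S × Z) → ℝ) :
    Set (Measure (S → ((S × Z) → ℝ) × ((S × Z) → ℝ))) :=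
  {μ | ∃ ν : S → Measure (((S × Z) → ℝ) × ((S × Z) → ℝ)),
    (∀ s, ν s ∈ DasSet (pbar s) (c s)) ∧ μ = Measure.pi ν}

/-- The term `n_z(b,p) V(f(b,p,z))`, with the convention that it is `0` when `n_z(b,p) = 0`. -/
noncomputable def bTerm [Fintype S] (V : (S → ℝ) → ℝ) (b : S → ℝ)
    (p : S → (S × Z) → ℝ) (z : Z) : ℝ :=
  if obsW b p z = 0 then 0 else obsW b p z * V (bUpd b p z)

/-- `U_V(b,a,μ̃)`. -/
noncomputable def UVal [Fintype S] [Fintype Z] (r : A → S → ℝ) (β : ℝ)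
    (V : (S → ℝ) → ℝ) (b : S → ℝ) (a : A)
    (μ : Measure (S → ((S × Z) → ℝ) × ((S × Z) → ℝ))) : ℝ :=
  ∫ x, ((∑ s, b s * r a s) + β * ∑ z, bTerm V b (fun s => (x s).1) z) ∂μ

/-- The distributionally robust Bellman operator `L`. -/
noncomputable def Lop [Fintype S] [Fintype Z] [Fintype A]
    (pbar c : A → S → (S × Z) → ℝ) (r : A → S → ℝ) (β : ℝ)
    (V : (S → ℝ) → ℝ) (b : S → ℝ) : ℝ :=
  ⨆ a : A, sInf ((fun μ => UVal r β V b a μ) '' DaSet (pbar a) (c a))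

end Defs

/-!
For a fixed kernel family `p`, the term `n_z(b,p) V(f(b,p,z))` is the perspective
`t V(m / t)`, `t = ∑ m`, of `V` at the unnormalized posterior `m = ∑_s p_s(·,z) b_s`, which is
bilinear in `(b, p)`; the perspective of a convex function is convex and positively homogeneous.

By Jensen's inequality, replacing each `μ̃_s` by the Dirac mass at its mean `(p̄_s, c_s)`
does not increase `U_V`, and this Dirac mass is again in `D̃_{as}` since the mean of `p` lies in
the box `B_{as}`. Given `μ̃₁, μ̃₂` for beliefs `b₁, b₂` and `b = λ b₁ + (1 - λ) b₂`, mixing the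
two mean kernels state by state with weights `λ b₁_s` and `(1 - λ) b₂_s` yields a kernel whose
unnormalized posteriors are the same mixture of those for `b₁` and `b₂`, so its Dirac measure
witnesses `Q(b) ≤ λ U_V(b₁, μ̃₁) + (1 - λ) U_V(b₂, μ̃₂)`.
-/

lemma ae_eq_of_pi_dirac {ι : Type*} [Fintype ι] {X : ι → Type*} [∀ i, MeasurableSpace (X i)]
    [∀ i, MeasurableSingletonClass (X i)] (x : ∀ i, X i) :
    ∀ᵐ y ∂Measure.pi (fun i => Measure.dirac (x i)), y = x :=
  Measure.ae_eq_pi (f := fun _ => id) (f' := fun i _ => x i) fun _ => ae_eq_dirac id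

theorem convexOn_sInf_image {E ι : Type*} [AddCommMonoid E] [Module ℝ E] {s : Set E}
    (hs : Convex ℝ s) {D : Set ι} {U : E → ι → ℝ} (hbdd : ∀ x ∈ s, BddBelow (U x '' D))
    (hmix : ∀ x ∈ s, ∀ y ∈ s, ∀ a b : ℝ, 0 ≤ a → 0 ≤ b → a + b = 1 → ∀ i ∈ D, ∀ j ∈ D,
      ∃ k ∈ D, U (a • x + b • y) k ≤ a * U x i + b * U y j) :
    ConvexOn ℝ s fun x => sInf (U x '' D) := by
  refine ⟨hs, fun x hx y hy a b ha hb hab => ?_⟩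
  rcases D.eq_empty_or_nonempty with rfl | hD
  · simp
  refine le_of_forall_pos_le_add fun ε hε => ?_
  obtain ⟨_, ⟨i, hi, rfl⟩, hxi⟩ := Real.lt_sInf_add_pos (hD.image (U x)) hε
  obtain ⟨_, ⟨j, hj, rfl⟩, hyj⟩ := Real.lt_sInf_add_pos (hD.image (U y)) hε
  obtain ⟨k, hk, hmixk⟩ := hmix x hx y hy a b ha hb hab i hi j hj
  calc sInf (U (a • x + b • y) '' D) ≤ U (a • x + b • y) k :=
        csInf_le (hbdd _ (hs hx hy ha hb hab)) ⟨k, hk, rfl⟩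
    _ ≤ a * U x i + b * U y j := hmixk
    _ ≤ a * (sInf (U x '' D) + ε) + b * (sInf (U y '' D) + ε) :=
        add_le_add (mul_le_mul_of_nonneg_left hxi.le ha) (mul_le_mul_of_nonneg_left hyj.le hb)
    _ = a • sInf (U x '' D) + b • sInf (U y '' D) + ε := by
        simp only [smul_eq_mul]; linear_combination ε * hab

section Perspective

variable {ι : Type*} [Fintype ι] {V : (ι → ℝ) → ℝ}

noncomputable def perspective (V : (ι → ℝ) → ℝ) (m : ι → ℝ) : ℝ :=
  if ∑ i, m i = 0 then 0 else (∑ i, m i) * V (fun i => m i / ∑ j, m j)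

lemma perspective_of_sum_ne_zero {m : ι → ℝ} (h : ∑ i, m i ≠ 0) :
    perspective V m = (∑ i, m i) * V (fun i => m i / ∑ j, m j) :=
  if_neg h

lemma perspective_smul {c : ℝ} (hc : 0 ≤ c) (m : ι → ℝ) :
    perspective V (c • m) = c * perspective V m := by
  rcases hc.eq_or_lt with rfl | hc
  · simp [perspective]
  have hsum : ∑ i, (c • m) i = c * ∑ i, m i := by simp [Finset.mul_sum]
  by_cases h : ∑ i, m i = 0
  · simp only [perspective, hsum, h, mul_zero, if_true]
  rw [perspective_of_sum_ne_zero (by rw [hsum]; positivity), perspective_of_sum_ne_zero h, hsum]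
  simp only [Pi.smul_apply, smul_eq_mul, mul_div_mul_left _ _ hc.ne']
  ring

lemma div_sum_mem_stdSimplex {m : ι → ℝ} (hm : 0 ≤ m) (h : ∑ i, m i ≠ 0) :
    (fun i => m i / ∑ j, m j) ∈ stdSimplex ℝ ι :=
  ⟨fun i => div_nonneg (hm i) (Finset.sum_nonneg fun j _ => hm j),
    by rw [← Finset.sum_div, div_self h]⟩

lemma perspective_add_le (hV : ConvexOn ℝ (stdSimplex ℝ ι) V) {m n : ι → ℝ} (hm : 0 ≤ m)
    (hn : 0 ≤ n) : perspective V (m + n) ≤ perspective V m + perspective V n := by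
  by_cases hm0 : ∑ i, m i = 0
  · simp [(Fintype.sum_eq_zero_iff_of_nonneg hm).1 hm0, perspective]
  by_cases hn0 : ∑ i, n i = 0
  · simp [(Fintype.sum_eq_zero_iff_of_nonneg hn).1 hn0, perspective]
  have hs : 0 < ∑ i, m i := (Finset.sum_nonneg fun i _ => hm i).lt_of_ne' hm0
  have ht : 0 < ∑ i, n i := (Finset.sum_nonneg fun i _ => hn i).lt_of_ne' hn0
  have hsum : ∑ i, (m + n) i = ∑ i, m i + ∑ i, n i := Finset.sum_add_distrib
  rw [perspective_of_sum_ne_zero (by rw [hsum]; positivity), perspective_of_sum_ne_zero hm0,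
    perspective_of_sum_ne_zero hn0, hsum]
  have hV' := hV.2 (div_sum_mem_stdSimplex hm hm0) (div_sum_mem_stdSimplex hn hn0)
    (div_nonneg hs.le (add_pos hs ht).le) (div_nonneg ht.le (add_pos hs ht).le)
    (by rw [← add_div, div_self (add_pos hs ht).ne'])
  generalize ∑ i, m i = s at hs hV' ⊢
  generalize ∑ i, n i = t at ht hV' ⊢
  simp only [smul_eq_mul] at hV'
  have hcomb : (fun i => (m + n) i / (s + t)) =
      (s / (s + t)) • (fun i => m i / s) + (t / (s + t)) • (fun i => n i / t) := by
    ext i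
    simp only [Pi.add_apply, Pi.smul_apply, smul_eq_mul]
    field_simp
  rw [hcomb]
  calc (s + t) * V _ ≤ (s + t) * (s / (s + t) * V (fun i => m i / s) +
        t / (s + t) * V (fun i => n i / t)) := by gcongr
    _ = _ := by field_simp

theorem convexOn_perspective (hV : ConvexOn ℝ (stdSimplex ℝ ι) V) :
    ConvexOn ℝ (Set.Ici 0) (perspective V) :=
  ⟨convex_Ici 0, fun m hm n hn a b ha hb _ => by
    simpa only [perspective_smul ha, perspective_smul hb, smul_eq_mul] using
      perspective_add_le hV (smul_nonneg ha hm) (smul_nonneg hb hn)⟩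

lemma abs_perspective_le {M : ℝ} (hM : ∀ x ∈ stdSimplex ℝ ι, |V x| ≤ M) {m : ι → ℝ}
    (hm : 0 ≤ m) : |perspective V m| ≤ M * ∑ i, m i := by
  by_cases h : ∑ i, m i = 0
  · simp [perspective, h]
  rw [perspective_of_sum_ne_zero h, abs_mul,
    abs_of_nonneg (Finset.sum_nonneg fun i _ => hm i), mul_comm]
  exact mul_le_mul_of_nonneg_right (hM _ (div_sum_mem_stdSimplex hm h))
    (Finset.sum_nonneg fun i _ => hm i)

theorem continuousOn_perspective (hV : ContinuousOn V (stdSimplex ℝ ι)) :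
    ContinuousOn (perspective V) (Set.Ici 0) := by
  have hsum : Continuous fun m : ι → ℝ => ∑ i, m i := by fun_prop
  intro m hm
  by_cases h : ∑ i, m i = 0
  · obtain ⟨M, hM⟩ := (isCompact_stdSimplex ℝ ι).exists_bound_of_continuousOn hV
    have hlim : Filter.Tendsto (fun m' : ι → ℝ => M * ∑ i, m' i) (nhdsWithin m (Set.Ici 0))
        (nhds 0) := by
      have := ((by fun_prop : Continuous fun m' : ι → ℝ => M * ∑ i, m' i).tendsto m).mono_left
        (nhdsWithin_le_nhds (s := Set.Ici 0))
      rwa [h, mul_zero] at this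
    simp only [ContinuousWithinAt, perspective, h, if_true]
    exact squeeze_zero_norm' (eventually_nhdsWithin_of_forall fun m' hm' =>
      abs_perspective_le (fun x hx => by simpa using hM x hx) hm') hlim
  · have hU : {m' : ι → ℝ | ∑ i, m' i ≠ 0} ∈ nhds m :=
      (isOpen_compl_singleton.preimage hsum).mem_nhds h
    have hnorm : ContinuousAt (fun m' : ι → ℝ => fun i => m' i / ∑ j, m' j) m :=
      continuousAt_pi.2 fun i => (continuous_apply i).continuousAt.div hsum.continuousAt h
    have hVn : ContinuousWithinAt (fun m' => V fun i => m' i / ∑ j, m' j)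
        (Set.Ici 0 ∩ {m' | ∑ i, m' i ≠ 0}) m :=
      (hV _ (div_sum_mem_stdSimplex hm h)).comp hnorm.continuousWithinAt
        fun m' hm' => div_sum_mem_stdSimplex hm'.1 hm'.2
    have hprod := hsum.continuousAt.continuousWithinAt.mul hVn
    rw [continuousWithinAt_inter hU] at hprod
    exact hprod.congr_of_eventuallyEq (eventually_nhdsWithin_of_eventually_nhds
      (Filter.mem_of_superset hU fun m' hm' => perspective_of_sum_ne_zero hm'))
      (perspective_of_sum_ne_zero h)

end Perspective

section Belief

variable {S Z : Type*} [Fintype S] {V : (S → ℝ) → ℝ}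

def unnormBelief (b : S → ℝ) (q : S → (S × Z) → ℝ) (z : Z) : S → ℝ :=
  fun s' => ∑ s, q s (s', z) * b s

lemma bTerm_eq_perspective (b : S → ℝ) (q : S → (S × Z) → ℝ) (z : Z) :
    bTerm V b q z = perspective V (unnormBelief b q z) := by
  have h : obsW b q z = ∑ s', unnormBelief b q z s' := Finset.sum_comm
  unfold bTerm bUpd
  rw [h]
  rfl

lemma unnormBelief_nonneg {b : S → ℝ} (hb : 0 ≤ b) {q : S → (S × Z) → ℝ} (hq : 0 ≤ q)
    (z : Z) : 0 ≤ unnormBelief b q z :=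
  fun _ => Finset.sum_nonneg fun s _ => mul_nonneg (hq s _) (hb s)

lemma unnormBelief_eq_of_smul_eq {b b₁ b₂ : S → ℝ} {p p₁ p₂ : S → (S × Z) → ℝ} {l k : ℝ}
    (h : ∀ s, b s • p s = (l * b₁ s) • p₁ s + (k * b₂ s) • p₂ s) (z : Z) :
    unnormBelief b p z = l • unnormBelief b₁ p₁ z + k • unnormBelief b₂ p₂ z := by
  ext s'
  have h' : ∀ s, p s (s', z) * b s = l * (p₁ s (s', z) * b₁ s) + k * (p₂ s (s', z) * b₂ s) :=
    fun s => by
      have hs := congrFun (h s) (s', z)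
      simp only [Pi.add_apply, Pi.smul_apply, smul_eq_mul] at hs
      linear_combination hs
  simp [unnormBelief, h', Finset.sum_add_distrib, Finset.mul_sum]

lemma measurable_bTerm (hV : Measurable V) (b : S → ℝ) (z : Z) :
    Measurable fun q : S → (S × Z) → ℝ => bTerm V b q z := by
  simp only [bTerm_eq_perspective, perspective]
  have hsum : Measurable fun q : S → (S × Z) → ℝ => ∑ s', unnormBelief b q z s' := by
    unfold unnormBelief; fun_prop
  refine Measurable.ite (hsum (measurableSet_singleton 0)) measurable_const ?_
  unfold unnormBelief; fun_prop

variable [Fintype Z]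

theorem sum_bTerm_le_of_smul_eq (hV : ConvexOn ℝ (stdSimplex ℝ S) V) {b b₁ b₂ : S → ℝ}
    (hb₁ : 0 ≤ b₁) (hb₂ : 0 ≤ b₂) {p p₁ p₂ : S → (S × Z) → ℝ} (hp₁ : 0 ≤ p₁) (hp₂ : 0 ≤ p₂)
    {l k : ℝ} (hl : 0 ≤ l) (hk : 0 ≤ k) (hlk : l + k = 1)
    (h : ∀ s, b s • p s = (l * b₁ s) • p₁ s + (k * b₂ s) • p₂ s) :
    ∑ z, bTerm V b p z ≤ l * ∑ z, bTerm V b₁ p₁ z + k * ∑ z, bTerm V b₂ p₂ z := by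
  simp only [bTerm_eq_perspective, unnormBelief_eq_of_smul_eq h, Finset.mul_sum,
    ← Finset.sum_add_distrib]
  exact Finset.sum_le_sum fun z _ => (convexOn_perspective hV).2
    (unnormBelief_nonneg hb₁ hp₁ z) (unnormBelief_nonneg hb₂ hp₂ z) hl hk hlk

theorem convexOn_sum_bTerm (hV : ConvexOn ℝ (stdSimplex ℝ S) V) {b : S → ℝ} (hb : 0 ≤ b) :
    ConvexOn ℝ (Set.Ici 0) fun q : S → (S × Z) → ℝ => ∑ z, bTerm V b q z :=
  ⟨convex_Ici 0, fun q₁ hq₁ q₂ hq₂ l k hl hk hlk => by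
    simpa only [smul_eq_mul] using sum_bTerm_le_of_smul_eq hV hb hb hq₁ hq₂ hl hk hlk
      fun s => by simp only [Pi.add_apply, Pi.smul_apply, smul_add, smul_smul, mul_comm]⟩

theorem continuousOn_sum_bTerm (hV : ContinuousOn V (stdSimplex ℝ S)) {b : S → ℝ} (hb : 0 ≤ b) :
    ContinuousOn (fun q : S → (S × Z) → ℝ => ∑ z, bTerm V b q z) (Set.Ici 0) := by
  simp only [bTerm_eq_perspective]
  refine continuousOn_finsetSum _ fun z _ => (continuousOn_perspective hV).comp
    (by unfold unnormBelief; fun_prop) fun q hq => unnormBelief_nonneg hb hq z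

end Belief

section AmbiguitySet

variable {S Z : Type*} [Fintype S] [Fintype Z] {pbar c : (S × Z) → ℝ}

lemma mk_mem_XasSet_iff {p u : (S × Z) → ℝ} : (p, u) ∈ XasSet pbar ↔ p ∈ BasSet pbar u := by
  simp only [XasSet, BasSet, Set.mem_ofPred_eq, abs_sub_le_iff, forall_and]
  tauto

lemma isClosed_XasSet : IsClosed (XasSet (S := S) (Z := Z) pbar) := by
  simp only [XasSet, Set.ofPred_and, Set.ofPred_forall]
  exact (isClosed_iInter fun i => isClosed_le (by fun_prop) (by fun_prop)).inter
    ((isClosed_iInter fun i => isClosed_le (by fun_prop) (by fun_prop)).inter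
      ((isClosed_stdSimplex ℝ _).preimage continuous_fst))

lemma convex_XasSet : Convex ℝ (XasSet (S := S) (Z := Z) pbar) := by
  rintro x ⟨hx₁, hx₂, hx₃⟩ y ⟨hy₁, hy₂, hy₃⟩ a b ha hb hab
  refine ⟨fun i => ?_, fun i => ?_, convex_stdSimplex ℝ _ hx₃ hy₃ ha hb hab⟩ <;>
  · simp only [Prod.fst_add, Prod.snd_add, Prod.smul_fst, Prod.smul_snd, Pi.add_apply,
      Pi.smul_apply, smul_eq_mul]
    linarith [mul_le_mul_of_nonneg_left (hx₁ i) ha, mul_le_mul_of_nonneg_left (hy₁ i) hb,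
      mul_le_mul_of_nonneg_left (hx₂ i) ha, mul_le_mul_of_nonneg_left (hy₂ i) hb,
      congrArg (· * pbar i) hab]

lemma convex_BasSet : Convex ℝ (BasSet pbar c) := fun p hp q hq a b ha hb hab => by
  have h := convex_XasSet (mk_mem_XasSet_iff.2 hp) (mk_mem_XasSet_iff.2 hq) ha hb hab
  rwa [Prod.smul_mk, Prod.smul_mk, Prod.mk_add_mk, ← add_smul, hab, one_smul,
    mk_mem_XasSet_iff] at h

variable {ν : Measure (((S × Z) → ℝ) × ((S × Z) → ℝ))}

lemma ae_mem_XasSet (hν : ν ∈ DasSet pbar c) : ∀ᵐ y ∂ν, y ∈ XasSet pbar := by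
  have := hν.1
  rw [ae_mem_iff_measure_eq isClosed_XasSet.measurableSet.nullMeasurableSet, hν.2.1,
    measure_univ]

lemma integrable_fst_of_mem_DasSet (hν : ν ∈ DasSet pbar c) :
    Integrable (fun y => y.1) ν := by
  have := hν.1
  obtain ⟨C, hC⟩ := (isCompact_stdSimplex ℝ (S × Z)).isBounded.exists_norm_le
  exact Integrable.of_bound measurable_fst.aestronglyMeasurable C
    ((ae_mem_XasSet hν).mono fun y hy => hC _ hy.2.2)

theorem integral_fst_mem_BasSet (hν : ν ∈ DasSet pbar c) : ∫ y, y.1 ∂ν ∈ BasSet pbar c := by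
  have := hν.1
  have hi := (integrable_fst_of_mem_DasSet hν).prodMk hν.2.2.1
  rw [← mk_mem_XasSet_iff, ← hν.2.2.2, ← integral_pair (integrable_fst_of_mem_DasSet hν)
    hν.2.2.1]
  exact convex_XasSet.integral_mem isClosed_XasSet (ae_mem_XasSet hν) hi

lemma dirac_mem_DasSet {p : (S × Z) → ℝ} (hp : p ∈ BasSet pbar c) :
    Measure.dirac (p, c) ∈ DasSet pbar c :=
  ⟨inferInstance, Measure.dirac_apply_of_mem (mk_mem_XasSet_iff.2 hp),
    integrable_dirac enorm_lt_top, by simp [integral_dirac]⟩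

end AmbiguitySet

section Value

variable {S Z A : Type*} [Fintype S] [Fintype Z] {V : (S → ℝ) → ℝ} (r : A → S → ℝ) (β : ℝ)
  (a : A)

lemma UVal_pi_dirac (b : S → ℝ) (x : S → ((S × Z) → ℝ) × ((S × Z) → ℝ)) :
    UVal r β V b a (Measure.pi fun s => Measure.dirac (x s)) =
      ∑ s, b s * r a s + β * ∑ z, bTerm V b (fun s => (x s).1) z := by
  rw [UVal, integral_congr_ae ((ae_eq_of_pi_dirac x).mono fun y hy =>
    congrArg (fun y : S → ((S × Z) → ℝ) × ((S × Z) → ℝ) =>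
      ∑ s, b s * r a s + β * ∑ z, bTerm V b (fun s => (y s).1) z) hy)]
  simp

variable {pbar c : S → (S × Z) → ℝ}

-- Jensen's inequality for the convex map `q ↦ ∑ z, bTerm V b q z` on the product of simplices
theorem le_UVal_pi (hV : Continuous V) (hVcv : ConvexOn ℝ (stdSimplex ℝ S) V) {b : S → ℝ}
    (hb : 0 ≤ b) (hβ : 0 ≤ β) {ν : S → Measure (((S × Z) → ℝ) × ((S × Z) → ℝ))}
    (hν : ∀ s, ν s ∈ DasSet (pbar s) (c s)) :
    ∑ s, b s * r a s + β * ∑ z, bTerm V b (fun s => ∫ y, y.1 ∂ν s) z ≤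
      UVal r β V b a (Measure.pi ν) := by
  have := fun s => (hν s).1
  set K : Set (S → (S × Z) → ℝ) := Set.univ.pi fun _ => stdSimplex ℝ (S × Z)
  have hK : K ⊆ Set.Ici 0 := fun q hq s => (hq s trivial).1
  have hGc : ContinuousOn (fun q => ∑ z, bTerm V b q z) K :=
    (continuousOn_sum_bTerm hV.continuousOn hb).mono hK
  obtain ⟨C, hC⟩ :=
    (isCompact_univ_pi fun _ => isCompact_stdSimplex ℝ _).exists_bound_of_continuousOn hGc
  have hFK : ∀ᵐ x ∂Measure.pi ν, (fun s => (x s).1) ∈ K := by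
    filter_upwards [Filter.eventually_all.2 fun s =>
      Measure.tendsto_eval_ae_ae.eventually (ae_mem_XasSet (hν s))] with x hx s _
    exact (hx s).2.2
  have hFi : ∀ s, Integrable (fun x => (x s).1) (Measure.pi ν) := fun s =>
    integrable_comp_eval (integrable_fst_of_mem_DasSet (hν s))
  have hGi : Integrable (fun x => ∑ z, bTerm V b (fun s => (x s).1) z) (Measure.pi ν) :=
    Integrable.of_bound (Finset.measurable_sum _ fun z _ =>
        (measurable_bTerm hV.measurable b z).comp (by fun_prop)).aestronglyMeasurable
      C (hFK.mono fun x hx => hC _ hx)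
  have hmean : ∫ x, (fun s => (x s).1) ∂Measure.pi ν = fun s => ∫ y, y.1 ∂ν s :=
    funext fun s => (eval_integral hFi s).trans
      (integral_comp_eval (μ := ν) (i := s) measurable_fst.aestronglyMeasurable)
  have hJensen := ((convexOn_sum_bTerm hVcv hb).subset hK
    (convex_pi fun _ _ => convex_stdSimplex ℝ _)).map_integral_le hGc
    (isClosed_set_pi fun _ _ => isClosed_stdSimplex ℝ _) hFK (Integrable.of_eval hFi) hGi
  rw [hmean] at hJensen
  rw [UVal, integral_add (integrable_const _) (hGi.const_mul β), integral_const,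
    integral_const_mul]
  simp only [probReal_univ, one_smul]
  gcongr

theorem bddBelow_UVal_image (hV : Continuous V) (hVcv : ConvexOn ℝ (stdSimplex ℝ S) V)
    {b : S → ℝ} (hb : 0 ≤ b) (hβ : 0 ≤ β) :
    BddBelow ((fun μ => UVal r β V b a μ) '' DaSet pbar c) := by
  obtain ⟨C, hC⟩ := (isCompact_univ_pi fun _ => isCompact_stdSimplex ℝ (S × Z)).bddBelow_image
    ((continuousOn_sum_bTerm hV.continuousOn hb).mono fun q hq s => (hq s trivial).1)
  refine ⟨∑ s, b s * r a s + β * C, ?_⟩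
  rintro _ ⟨_, ⟨ν, hν, rfl⟩, rfl⟩
  refine le_trans ?_ (le_UVal_pi r β a hV hVcv hb hβ hν)
  gcongr
  exact hC ⟨_, fun s _ => (integral_fst_mem_BasSet (hν s)).1, rfl⟩

theorem exists_UVal_le_of_mem_DaSet (hV : Continuous V) (hVcv : ConvexOn ℝ (stdSimplex ℝ S) V)
    (hβ : 0 ≤ β) {b₁ b₂ : S → ℝ} (hb₁ : 0 ≤ b₁) (hb₂ : 0 ≤ b₂) {l k : ℝ} (hl : 0 ≤ l)
    (hk : 0 ≤ k) (hlk : l + k = 1) {μ₁ μ₂ : Measure (S → ((S × Z) → ℝ) × ((S × Z) → ℝ))}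
    (hμ₁ : μ₁ ∈ DaSet pbar c) (hμ₂ : μ₂ ∈ DaSet pbar c) :
    ∃ μ ∈ DaSet pbar c, UVal r β V (l • b₁ + k • b₂) a μ ≤
      l * UVal r β V b₁ a μ₁ + k * UVal r β V b₂ a μ₂ := by
  obtain ⟨ν₁, hν₁, rfl⟩ := hμ₁
  obtain ⟨ν₂, hν₂, rfl⟩ := hμ₂
  set p₁ := fun s => ∫ y, y.1 ∂ν₁ s
  set p₂ := fun s => ∫ y, y.1 ∂ν₂ s
  have hp₁ : ∀ s, p₁ s ∈ BasSet (pbar s) (c s) := fun s => integral_fst_mem_BasSet (hν₁ s)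
  have hp₂ : ∀ s, p₂ s ∈ BasSet (pbar s) (c s) := fun s => integral_fst_mem_BasSet (hν₂ s)
  choose p hp hpeq using fun s => convex_BasSet.exists_mem_add_smul_eq (hp₁ s) (hp₂ s)
    (mul_nonneg hl (hb₁ s)) (mul_nonneg hk (hb₂ s))
  refine ⟨Measure.pi fun s => Measure.dirac (p s, c s),
    ⟨_, fun s => dirac_mem_DasSet (hp s), rfl⟩, ?_⟩
  have hG := sum_bTerm_le_of_smul_eq (b := l • b₁ + k • b₂) hVcv hb₁ hb₂
    (fun s => (hp₁ s).1.1) (fun s => (hp₂ s).1.1) hl hk hlk fun s => by simpa using hpeq s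
  have hR : ∑ s, (l • b₁ + k • b₂) s * r a s =
      l * ∑ s, b₁ s * r a s + k * ∑ s, b₂ s * r a s := by
    simp [add_mul, Finset.sum_add_distrib, Finset.mul_sum, mul_assoc]
  rw [UVal_pi_dirac, hR]
  calc _ ≤ l * (∑ s, b₁ s * r a s + β * ∑ z, bTerm V b₁ p₁ z) +
        k * (∑ s, b₂ s * r a s + β * ∑ z, bTerm V b₂ p₂ z) := by
        linarith [mul_le_mul_of_nonneg_left hG hβ]
    _ ≤ _ := add_le_add (mul_le_mul_of_nonneg_left (le_UVal_pi r β a hV hVcv hb₁ hβ hν₁) hl)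
        (mul_le_mul_of_nonneg_left (le_UVal_pi r β a hV hVcv hb₂ hβ hν₂) hk)

end Value

theorem Q_convex_in_belief_general {S Z A : Type*} [Fintype S]
    [Fintype Z]
    (pbar c : A → S → (S × Z) → ℝ)
    (r : A → S → ℝ) (β : ℝ) (hβ0 : 0 < β)
    (V : (S → ℝ) → ℝ) (hVct : Continuous V) (hVcv : ConvexOn ℝ (stdSimplex ℝ S) V)
    (a : A) :
    ConvexOn ℝ (stdSimplex ℝ S)
      (fun b => sInf ((fun μ => UVal r β V b a μ) '' DaSet (pbar a) (c a))) :=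
  convexOn_sInf_image (convex_stdSimplex ℝ S)
    (fun _ hb => bddBelow_UVal_image r β a hVct hVcv hb.1 hβ0.le)
    fun _ hb₁ _ hb₂ _ _ hl hk hlk _ hμ₁ _ hμ₂ =>
      exists_UVal_le_of_mem_DaSet r β a hVct hVcv hβ0.le hb₁.1 hb₂.1 hl hk hlk hμ₁ hμ₂

/-- For a convex continuous value function `V` and any action `a`, the function
`Q(b) = inf_{μ̃ ∈ D̃_a} U_V(b,a,μ̃)` is convex in the belief state `b` on `Δ(S)`. -/
theorem Q_convex_in_belief {S Z A : Type*} [Fintype S] [Nonempty S]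
    [Fintype Z] [Nonempty Z] [Fintype A] [Nonempty A]
    (pbar c : A → S → (S × Z) → ℝ)
    (hpbar : ∀ a s, pbar a s ∈ stdSimplex ℝ (S × Z))
    (hc : ∀ a s i, 0 ≤ c a s i)
    (r : A → S → ℝ) (β : ℝ) (hβ0 : 0 < β) (hβ1 : β < 1)
    (V : (S → ℝ) → ℝ) (hVct : Continuous V) (hVcv : ConvexOn ℝ (stdSimplex ℝ S) V)
    (a : A) :
    ConvexOn ℝ (stdSimplex ℝ S)
      (fun b => sInf ((fun μ => UVal r β V b a μ) '' DaSet (pbar a) (c a))) :=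
  Q_convex_in_belief_general pbar c r β hβ0 V hVct hVcv a
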